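/- arXiv:1507.02430 — 4 statements merged into one kernel-verified Lean document; each statement's English description precedes it below -/
import Mathlib

section
/- Let (α_j) be a sequence of pairwise distinct nonzero complex numbers with ∑_{j=1}^∞ 1/|α_j| < ∞. Then for any sequences of complex numbers (p_j) and (k_j), there exists an entire function g : ℂ → ℂ such that g(α_j) = p_j and g'(α_j) = k_j for every j ≥ 1. -/
/-!
Build the interpolant as a series of polynomials `∑ T n`. The term `T n` is divisible by
`∏_{j<n} (X - α j)²`, so it does not disturb the values and derivatives already fixed at
`α 0, …, α (n-1)`; it corrects the value and derivative of the partial sum at `α n`; and it is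
at most `2⁻ⁿ` on the disc `‖z‖ ≤ ‖α n‖ / 2`. The last property comes from multiplying by a
high power of `z / α n`, which equals `1` at `α n` and is uniformly small on the disc.
Since `‖α n‖ → ∞`, every compact set lies in all but finitely many of these discs, so the
series converges locally uniformly and, by Weierstrass' theorem, its sum is entire and
its derivative is the limit of the derivatives of the partial sums.
-/

open Polynomial Finset Filter Topology

namespace Polynomial

variable {R : Type*} [CommRing R]

lemma eval_eq_zero_and_derivative_eval_eq_zero_of_sq_dvd {a : R} {P : R[X]}
    (h : (X - C a) ^ 2 ∣ P) : P.eval a = 0 ∧ P.derivative.eval a = 0 := by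
  obtain ⟨Q, rfl⟩ := h
  constructor
  · simp
  · simp [derivative_mul, derivative_pow]

lemma eval_mul_pow_of_eval_eq_one {a : R} {W : R[X]} (hW : W.eval a = 1) (Q : R[X]) (m : ℕ) :
    (Q * W ^ m).eval a = Q.eval a := by
  simp [hW]

lemma derivative_mul_pow_eval_of_eval_eq_zero {a : R} {W : R[X]} (hW : W.eval a = 1) {Q : R[X]}
    (hQ : Q.eval a = 0) (m : ℕ) : (Q * W ^ m).derivative.eval a = Q.derivative.eval a := by
  simp [derivative_mul, hW, hQ]

end Polynomial

section NormedField

variable {𝕜 : Type*} [NormedField 𝕜] [ProperSpace 𝕜]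

lemma eventually_norm_eval_mul_pow_le (P : 𝕜[X]) {a : 𝕜} {r ε : ℝ} (hr₀ : 0 ≤ r)
    (hr : r < ‖a‖) (hε : 0 < ε) :
    ∀ᶠ m in atTop, ∀ z : 𝕜, ‖z‖ ≤ r → ‖(P * (C a⁻¹ * X) ^ m).eval z‖ ≤ ε := by
  have ha : 0 < ‖a‖ := hr₀.trans_lt hr
  obtain ⟨S, hS⟩ := (isCompact_closedBall (0 : 𝕜) r).exists_bound_of_continuousOn
    P.continuous.continuousOn
  have hS₀ : 0 ≤ S := (norm_nonneg _).trans (hS 0 (by simpa using hr₀))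
  have hlim : Tendsto (fun m : ℕ => S * (r / ‖a‖) ^ m) atTop (𝓝 0) := by
    simpa using (tendsto_pow_atTop_nhds_zero_of_lt_one (by positivity)
      ((div_lt_one ha).2 hr)).const_mul S
  filter_upwards [hlim.eventually (ge_mem_nhds hε)] with m hm z hz
  rw [eval_mul, eval_pow, eval_mul, eval_C, eval_X, norm_mul, norm_pow, norm_mul, norm_inv,
    inv_mul_eq_div]
  calc ‖P.eval z‖ * (‖z‖ / ‖a‖) ^ m ≤ S * (r / ‖a‖) ^ m := by
        gcongr
        exact hS z (by simpa using hz)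
    _ ≤ ε := hm

theorem exists_dvd_eval_derivative_eval_norm_le (B : 𝕜[X]) {a : 𝕜} (hB : B.eval a ≠ 0)
    (x y : 𝕜) {r ε : ℝ} (hr₀ : 0 ≤ r) (hr : r < ‖a‖) (hε : 0 < ε) :
    ∃ P : 𝕜[X], B ∣ P ∧ P.eval a = x ∧ P.derivative.eval a = y ∧
      ∀ z : 𝕜, ‖z‖ ≤ r → ‖P.eval z‖ ≤ ε := by
  set W : 𝕜[X] := C a⁻¹ * X
  have hW : W.eval a = 1 := by
    simp [W, inv_mul_cancel₀ (norm_pos_iff.1 (hr₀.trans_lt hr))]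
  set P₁ : 𝕜[X] := C (x / B.eval a) * B
  obtain ⟨m₁, hm₁⟩ := (eventually_norm_eval_mul_pow_le P₁ hr₀ hr (half_pos hε)).exists
  set P₂ : 𝕜[X] := C ((y - (P₁ * W ^ m₁).derivative.eval a) / B.eval a) * (X - C a) * B
  obtain ⟨m₂, hm₂⟩ := (eventually_norm_eval_mul_pow_le P₂ hr₀ hr (half_pos hε)).exists
  have hP₂ : P₂.eval a = 0 := by simp [P₂]
  refine ⟨P₁ * W ^ m₁ + P₂ * W ^ m₂, ?_, ?_, ?_, fun z hz => ?_⟩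
  · exact dvd_add ((dvd_mul_left B _).mul_right _) ((dvd_mul_left B _).mul_right _)
  · rw [eval_add, eval_mul_pow_of_eval_eq_one hW, eval_mul_pow_of_eval_eq_one hW, hP₂]
    simp [P₁, hB]
  · rw [derivative_add, eval_add, derivative_mul_pow_eval_of_eval_eq_zero hW hP₂]
    simp [P₂, derivative_mul, hB]
  · calc ‖(P₁ * W ^ m₁ + P₂ * W ^ m₂).eval z‖
        ≤ ‖(P₁ * W ^ m₁).eval z‖ + ‖(P₂ * W ^ m₂).eval z‖ := by
          rw [eval_add]; exact norm_add_le _ _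
      _ ≤ ε / 2 + ε / 2 := add_le_add (hm₁ z hz) (hm₂ z hz)
      _ = ε := add_halves ε

theorem exists_polynomial_hermite_series (α : ℕ → 𝕜) (hinj : Function.Injective α)
    (hne : ∀ j, α j ≠ 0) (p k : ℕ → 𝕜) :
    ∃ T : ℕ → 𝕜[X], (∀ n z, ‖z‖ ≤ ‖α n‖ / 2 → ‖(T n).eval z‖ ≤ (1 / 2) ^ n) ∧
      ∀ j N, j < N → (∑ n ∈ range N, T n).eval (α j) = p j ∧
        (∑ n ∈ range N, T n).derivative.eval (α j) = k j := by
  set B : ℕ → 𝕜[X] := fun n => ∏ j ∈ range n, (X - C (α j)) ^ 2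
  have hB : ∀ n, (B n).eval (α n) ≠ 0 := fun n => by
    simp only [B, eval_prod, eval_pow, eval_sub, eval_X, eval_C]
    exact prod_ne_zero_iff.2 fun j hj =>
      pow_ne_zero _ (sub_ne_zero.2 (hinj.ne (mem_range.1 hj).ne'))
  choose! step hdvd hval hder hsmall using fun n (Q : 𝕜[X]) =>
    exists_dvd_eval_derivative_eval_norm_le (B n) (hB n) (p n - Q.eval (α n))
      (k n - Q.derivative.eval (α n)) (by positivity) (half_lt_self (norm_pos_iff.2 (hne n)))
      (pow_pos (one_half_pos (α := ℝ)) n)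
  set S : ℕ → 𝕜[X] := fun N => Nat.rec 0 (fun n Q => Q + step n Q) N
  have hS_succ : ∀ N, S (N + 1) = S N + step N (S N) := fun N => rfl
  have hS : ∀ N, ∑ n ∈ range N, step n (S n) = S N := fun N => by
    induction N with
    | zero => rfl
    | succ N ih => rw [sum_range_succ, ih, hS_succ]
  refine ⟨fun n => step n (S n), fun n => hsmall n (S n), fun j N hjN => ?_⟩
  rw [hS]
  induction N, hjN using Nat.le_induction with
  | base =>
    rw [hS_succ, eval_add, derivative_add, eval_add, hval, hder]
    exact ⟨add_sub_cancel _ _, add_sub_cancel _ _⟩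
  | succ N hjN ih =>
    have hsq : (X - C (α j)) ^ 2 ∣ step N (S N) :=
      (dvd_prod_of_mem (fun i => (X - C (α i)) ^ 2) (mem_range.2 hjN)).trans (hdvd N (S N))
    obtain ⟨h₀, h₁⟩ := eval_eq_zero_and_derivative_eval_eq_zero_of_sq_dvd hsq
    rw [hS_succ, eval_add, derivative_add, eval_add, h₀, h₁, add_zero, add_zero]
    exact ih

end NormedField

theorem tendstoLocallyUniformly_tsum_nat_of_norm_le {X E : Type*} [SeminormedAddCommGroup X]
    [LocallyCompactSpace X] [NormedAddCommGroup E] [CompleteSpace E] {F : ℕ → X → E}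
    {u R : ℕ → ℝ} (hu : Summable u) (hR : Tendsto R atTop atTop)
    (hF : ∀ n x, ‖x‖ ≤ R n → ‖F n x‖ ≤ u n) :
    TendstoLocallyUniformly (fun N x => ∑ n ∈ range N, F n x) (fun x => ∑' n, F n x) atTop := by
  refine tendstoLocallyUniformly_iff_forall_isCompact.2 fun K hK => ?_
  obtain ⟨ρ, hρ⟩ := hK.isBounded.subset_closedBall 0
  refine tendstoUniformlyOn_tsum_nat_eventually hu ?_
  filter_upwards [hR.eventually_ge_atTop ρ] with n hn x hx
  exact hF n x ((mem_closedBall_zero_iff.1 (hρ hx)).trans hn)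

/-- If `(α j)` are pairwise distinct nonzero complex numbers with
`∑ 1/|α j| < ∞`, then for any complex sequences `(p j)` and `(k j)` there is an entire
function `g` with `g (α j) = p j` and `g' (α j) = k j` for every `j`. -/
theorem holomorphic_interpolation (α : ℕ → ℂ) (hinj : Function.Injective α)
    (hne : ∀ j, α j ≠ 0) (hsum : Summable fun j => 1 / ‖α j‖) (p k : ℕ → ℂ) :
    ∃ g : ℂ → ℂ, Differentiable ℂ g ∧
      ∀ j, g (α j) = p j ∧ deriv g (α j) = k j := by
  obtain ⟨T, hT_small, hT_interp⟩ := exists_polynomial_hermite_series α hinj hne p k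
  have hR : Tendsto (fun n => ‖α n‖ / 2) atTop atTop :=
    (Summable.tendsto_atTop_of_pos
      (by simpa only [one_div] using hsum : Summable fun n => ‖α n‖⁻¹)
      fun n => norm_pos_iff.2 (hne n)).atTop_div_const two_pos
  have hpartial : ∀ N, (fun z => ∑ n ∈ range N, (T n).eval z) = (∑ n ∈ range N, T n).eval :=
    fun N => funext fun z => (eval_finsetSum _ _ _).symm
  have hlim := (tendstoLocallyUniformly_tsum_nat_of_norm_le summable_geometric_two hR
    hT_small).tendstoLocallyUniformlyOn (s := Set.univ)
  have hdiff : ∀ᶠ N in atTop,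
      DifferentiableOn ℂ (fun z => ∑ n ∈ range N, (T n).eval z) Set.univ :=
    Eventually.of_forall fun N => by
      rw [hpartial]; exact (Polynomial.differentiable _).differentiableOn
  have hderiv := hlim.deriv hdiff isOpen_univ
  refine ⟨_, differentiableOn_univ.1 (hlim.differentiableOn hdiff isOpen_univ), fun j => ⟨?_, ?_⟩⟩
  · refine tendsto_nhds_unique_of_eventuallyEq (hlim.tendsto_at (Set.mem_univ (α j)))
      tendsto_const_nhds ?_
    filter_upwards [eventually_gt_atTop j] with N hN
    simpa only [eval_finsetSum] using (hT_interp j N hN).1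
  · refine tendsto_nhds_unique_of_eventuallyEq (hderiv.tendsto_at (Set.mem_univ (α j)))
      tendsto_const_nhds ?_
    filter_upwards [eventually_gt_atTop j] with N hN
    simpa only [Function.comp_apply, hpartial, Polynomial.deriv] using (hT_interp j N hN).2
end

section
/- Let (α_j) be a sequence of pairwise distinct nonzero complex numbers with ∑_{j=1}^∞ 1/|α_j| < ∞, and let h(z) = ∏_{j=1}^∞ (1 - z/α_j)^2. If f is an entire function vanishing to order at least 2 at each α_j, then f is divisible by h, i.e., f = h·u for some entire function u. -/
/-!
On a disc `‖z‖ < R` all but finitely many factors `(1 - z / α j) ^ 2` lie within `3 R / ‖α j‖`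
of `1`, so there `h` is a partial product times a tail product that converges locally uniformly
and does not vanish. Hence every zero of `h` is some `α j`, and since the `α j` are distinct it is
a zero of order exactly two. As `f` vanishes to order at least two there, `f / h` has only
removable singularities, and filling them in with `limUnder (𝓝[≠] z) (f / h)` gives the entire
quotient.
-/

open Filter Topology Metric Finset

section RemovableQuotient

variable {X Y : Type*} [TopologicalSpace X] [T1Space X] [∀ x : X, (𝓝[≠] x).NeBot]
  [TopologicalSpace Y] [T2Space Y] [Nonempty Y]

theorem eventuallyEq_limUnder_nhdsNE {F v : X → Y} {a : X} (hFv : F =ᶠ[𝓝[≠] a] v)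
    (hv : ∀ᶠ z in 𝓝 a, ContinuousAt v z) :
    (fun z ↦ limUnder (𝓝[≠] z) F) =ᶠ[𝓝 a] v := by
  have hlim {w : X} (hw : F =ᶠ[𝓝[≠] w] v) (hvw : ContinuousAt v w) :
      limUnder (𝓝[≠] w) F = v w :=
    ((hvw.tendsto.mono_left nhdsWithin_le_nhds).congr' hw.symm).limUnder_eq
  filter_upwards [(eventually_nhdsWithin_iff.mp hFv).eventually_nhds, hv] with w hw hvw
  rcases eq_or_ne w a with rfl | hwa
  · exact hlim hFv hvw
  · refine hlim (Eventually.filter_mono nhdsWithin_le_nhds ?_) hvw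
    filter_upwards [hw, eventually_ne_nhds hwa] with z hz hza using hz hza

end RemovableQuotient

section AnalyticOrder

variable {𝕜 : Type*} [NontriviallyNormedField 𝕜] {f h : 𝕜 → 𝕜} {a : 𝕜}

theorem AnalyticAt.exists_eventually_eq_mul_of_analyticOrderAt_le (hf : AnalyticAt 𝕜 f a)
    (hh : AnalyticAt 𝕜 h a) (hfin : analyticOrderAt h a ≠ ⊤)
    (hle : analyticOrderAt h a ≤ analyticOrderAt f a) :
    ∃ v, AnalyticAt 𝕜 v a ∧ ∀ᶠ z in 𝓝 a, f z = h z * v z := by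
  obtain ⟨g, hg, hga, hhg⟩ := hh.analyticOrderAt_ne_top.mp hfin
  rw [← Nat.cast_analyticOrderNatAt hfin] at hle
  obtain ⟨ψ, hψ, hfψ⟩ := (natCast_le_analyticOrderAt hf).mp hle
  refine ⟨ψ / g, hψ.div hg hga, ?_⟩
  filter_upwards [hfψ, hhg, hg.continuousAt.eventually_ne hga] with z hfz hhz hgz
  rw [hfz, hhz, Pi.div_apply, smul_eq_mul, smul_eq_mul, mul_assoc, mul_div_cancel₀ _ hgz]

theorem AnalyticOnNhd.exists_eq_mul_of_analyticOrderAt_le [CompleteSpace 𝕜] {U : Set 𝕜}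
    (hf : AnalyticOnNhd 𝕜 f U) (hh : AnalyticOnNhd 𝕜 h U)
    (hord : ∀ a ∈ U, analyticOrderAt h a ≠ ⊤ ∧ analyticOrderAt h a ≤ analyticOrderAt f a) :
    ∃ u, AnalyticOnNhd 𝕜 u U ∧ ∀ z ∈ U, f z = h z * u z := by
  set u : 𝕜 → 𝕜 := fun z ↦ limUnder (𝓝[≠] z) fun w ↦ f w / h w
  have hloc : ∀ a ∈ U,
      ∃ v, AnalyticAt 𝕜 v a ∧ (∀ᶠ z in 𝓝 a, f z = h z * v z) ∧ u =ᶠ[𝓝 a] v := by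
    intro a ha
    obtain ⟨hfin, hle⟩ := hord a ha
    obtain ⟨v, hv, hfv⟩ :=
      (hf a ha).exists_eventually_eq_mul_of_analyticOrderAt_le (hh a ha) hfin hle
    have hh0 : ∀ᶠ z in 𝓝[≠] a, h z ≠ 0 :=
      (hh a ha).eventually_eq_zero_or_eventually_ne_zero.resolve_left
        (analyticOrderAt_eq_top.not.mp hfin)
    refine ⟨v, hv, hfv, eventuallyEq_limUnder_nhdsNE ?_ ?_⟩
    · filter_upwards [hh0, hfv.filter_mono nhdsWithin_le_nhds] with z hz hfz
      rw [hfz, mul_div_cancel_left₀ _ hz]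
    · filter_upwards [hv.eventually_analyticAt] with z hz using hz.continuousAt
  refine ⟨u, fun a ha ↦ ?_, fun a ha ↦ ?_⟩
  · obtain ⟨v, hv, -, huv⟩ := hloc a ha
    exact hv.congr huv.symm
  · obtain ⟨v, -, hfv, huv⟩ := hloc a ha
    rw [huv.eq_of_nhds]
    exact hfv.self_of_nhds

end AnalyticOrder

section SquareProduct

theorem norm_one_sub_sq_sub_one_le {w : ℂ} (hw : ‖w‖ ≤ 1) :
    ‖(1 - w) ^ 2 - 1‖ ≤ 3 * ‖w‖ := by
  have h2 : ‖w - 2‖ ≤ 3 := (norm_sub_le _ _).trans (by norm_num; linarith)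
  calc ‖(1 - w) ^ 2 - 1‖ = ‖w‖ * ‖w - 2‖ := by rw [← norm_mul]; ring_nf
    _ ≤ 3 * ‖w‖ := by nlinarith [norm_nonneg w]

theorem prod_one_sub_div_sq_eq_sq_mul {α : ℕ → ℂ} {s : Finset ℕ} {j : ℕ} (hj : j ∈ s)
    (hα : α j ≠ 0) (z : ℂ) :
    ∏ i ∈ s, (1 - z / α i) ^ 2
      = (z - α j) ^ 2 * ((α j)⁻¹ ^ 2 * ∏ i ∈ s.erase j, (1 - z / α i) ^ 2) := by
  rw [← mul_prod_erase s _ hj]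
  field_simp
  ring

variable {α : ℕ → ℂ} {h : ℂ → ℂ}

theorem exists_eq_prod_mul_tail (hsum : Summable fun j ↦ 1 / ‖α j‖)
    (hprod : TendstoLocallyUniformly
      (fun N z ↦ ∏ j ∈ range N, (1 - z / α j) ^ 2) h atTop) (R : ℝ) :
    ∃ (N₀ : ℕ) (T : ℂ → ℂ), DifferentiableOn ℂ T (ball 0 R) ∧
      ∀ z ∈ ball 0 R, T z ≠ 0 ∧ h z = (∏ j ∈ range N₀, (1 - z / α j) ^ 2) * T z := by
  obtain ⟨N₀, hN₀⟩ : ∃ N₀, ∀ j ≥ N₀, R * (1 / ‖α j‖) ≤ 1 / 2 :=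
    eventually_atTop.mp <| (hsum.mul_left R).tendsto_atTop_zero.eventually
      (ge_mem_nhds (by norm_num))
  have hw : ∀ n, ∀ z ∈ ball (0 : ℂ) R, ‖z / α (N₀ + n)‖ ≤ R * (1 / ‖α (N₀ + n)‖) := by
    intro n z hz
    rw [norm_div, div_eq_mul_one_div]
    exact mul_le_mul_of_nonneg_right (mem_ball_zero_iff.mp hz).le (by positivity)
  have hw_half : ∀ n, ∀ z ∈ ball (0 : ℂ) R, ‖z / α (N₀ + n)‖ ≤ 1 / 2 := fun n z hz ↦
    (hw n z hz).trans (hN₀ _ (by omega))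
  set c : ℕ → ℂ → ℂ := fun n z ↦ (1 - z / α (N₀ + n)) ^ 2 - 1
  have hc : ∀ n, ∀ z ∈ ball (0 : ℂ) R, ‖c n z‖ ≤ 3 * (R * (1 / ‖α (N₀ + n)‖)) :=
    fun n z hz ↦ (norm_one_sub_sq_sub_one_le (by linarith [hw_half n z hz])).trans
      (by linarith [hw n z hz])
  have hu : Summable fun n ↦ 3 * (R * (1 / ‖α (N₀ + n)‖)) :=
    ((hsum.mul_left R).comp_injective (add_right_injective N₀)).mul_left 3
  have hT := Summable.hasProdLocallyUniformlyOn_nat_one_add isOpen_ball hu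
    (Eventually.of_forall hc) fun n ↦ by fun_prop
  refine ⟨N₀, fun z ↦ ∏' n, (1 + c n z), ?_, fun z hz ↦ ⟨?_, ?_⟩⟩
  · exact hT.tendstoLocallyUniformlyOn_finsetRange.differentiableOn
      (Eventually.of_forall fun n ↦ by fun_prop) isOpen_ball
  · refine tprod_one_add_ne_zero_of_summable (fun n ↦ ?_)
      (hu.of_nonneg_of_le (fun n ↦ norm_nonneg _) (hc · z hz))
    refine (add_sub_cancel _ _).trans_ne (pow_ne_zero 2 (sub_ne_zero.mpr fun h1 ↦ ?_))
    have := hw_half n z hz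
    norm_num [← h1] at this
  · have hlim :
        Tendsto (fun n ↦ ∏ j ∈ range (N₀ + n), (1 - z / α j) ^ 2) atTop (𝓝 (h z)) :=
      ((tendstoLocallyUniformlyOn_univ.mpr hprod).tendsto_at (Set.mem_univ z)).comp
        ((tendsto_add_atTop_nat N₀).congr fun n ↦ add_comm n N₀)
    refine tendsto_nhds_unique hlim ?_
    simp_rw [prod_range_add]
    exact tendsto_const_nhds.mul <| by simpa [c] using (hT.hasProd hz).tendsto_prod_nat

theorem differentiable_of_tendstoLocallyUniformly_prod
    (hprod : TendstoLocallyUniformly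
      (fun N z ↦ ∏ j ∈ range N, (1 - z / α j) ^ 2) h atTop) : Differentiable ℂ h :=
  differentiableOn_univ.mp <| (tendstoLocallyUniformlyOn_univ.mpr hprod).differentiableOn
    (Eventually.of_forall fun N ↦ by fun_prop) isOpen_univ

theorem exists_eq_and_analyticOrderAt_eq_two (hinj : Function.Injective α)
    (hsum : Summable fun j ↦ 1 / ‖α j‖)
    (hprod : TendstoLocallyUniformly
      (fun N z ↦ ∏ j ∈ range N, (1 - z / α j) ^ 2) h atTop) {a : ℂ} (ha : h a = 0) :
    ∃ j, α j = a ∧ analyticOrderAt h a = 2 := by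
  obtain ⟨N₀, T, hTd, hT⟩ := exists_eq_prod_mul_tail hsum hprod (‖a‖ + 1)
  have haB : a ∈ ball (0 : ℂ) (‖a‖ + 1) := by simp
  obtain ⟨hTa, hha⟩ := hT a haB
  obtain ⟨j, hj, hja⟩ : ∃ j ∈ range N₀, (1 - a / α j) ^ 2 = 0 :=
    prod_eq_zero_iff.mp ((mul_eq_zero.mp (ha ▸ hha).symm).resolve_right hTa)
  have haj : a / α j = 1 := (sub_eq_zero.mp (pow_eq_zero_iff two_ne_zero |>.mp hja)).symm
  have hαj : α j ≠ 0 := by rintro h0; simp [h0] at haj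
  obtain rfl : a = α j := eq_of_div_eq_one haj
  set q : ℂ → ℂ := fun z ↦ (α j)⁻¹ ^ 2 * ∏ i ∈ (range N₀).erase j, (1 - z / α i) ^ 2
  have hqj : q (α j) ≠ 0 := by
    refine mul_ne_zero (by simpa using hαj) (prod_ne_zero_iff.mpr fun i hi ↦ ?_)
    refine pow_ne_zero 2 fun h0 ↦ ?_
    exact (mem_erase.mp hi).1 (hinj (eq_of_div_eq_one (sub_eq_zero.mp h0).symm)).symm
  refine ⟨j, rfl, ((differentiable_of_tendstoLocallyUniformly_prod hprod).analyticAt _)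
    |>.analyticOrderAt_eq_natCast.mpr ⟨fun z ↦ q z * T z, ?_, mul_ne_zero hqj hTa, ?_⟩⟩
  · exact ((Differentiable.analyticAt (by fun_prop) _).mul
      (hTd.analyticAt (isOpen_ball.mem_nhds haB)))
  · filter_upwards [isOpen_ball.mem_nhds haB] with z hz
    rw [(hT z hz).2, prod_one_sub_div_sq_eq_sq_mul hj hαj, smul_eq_mul, mul_assoc]

end SquareProduct

theorem divisible_by_product_general (α : ℕ → ℂ) (hinj : Function.Injective α)
    (hsum : Summable fun j => 1 / ‖α j‖)
    (h : ℂ → ℂ)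
    (hprod : TendstoLocallyUniformly
      (fun N z => ∏ j ∈ Finset.range N, (1 - z / α j) ^ 2) h atTop)
    (f : ℂ → ℂ) (hf : Differentiable ℂ f)
    (hvanish : ∀ j, f (α j) = 0 ∧ deriv f (α j) = 0) :
    ∃ u : ℂ → ℂ, Differentiable ℂ u ∧ ∀ z, f z = h z * u z := by
  have hh := differentiable_of_tendstoLocallyUniformly_prod hprod
  have hord : ∀ a ∈ Set.univ,
      analyticOrderAt h a ≠ ⊤ ∧ analyticOrderAt h a ≤ analyticOrderAt f a := by
    intro a _
    by_cases ha : h a = 0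
    · obtain ⟨j, rfl, hj⟩ := exists_eq_and_analyticOrderAt_eq_two hinj hsum hprod ha
      have h2 : ((2 : ℕ) : ℕ∞) ≤ analyticOrderAt f (α j) :=
        (natCast_le_analyticOrderAt_iff_iteratedDeriv_eq_zero (hf.analyticAt _)).mpr
          fun i hi ↦ by interval_cases i <;> simp [hvanish j]
      exact ⟨hj ▸ ENat.natCast_ne_top 2, hj ▸ h2⟩
    · rw [(hh.analyticAt a).analyticOrderAt_eq_zero.mpr ha]
      exact ⟨ENat.zero_ne_top, zero_le⟩
  obtain ⟨u, hu, hfu⟩ := AnalyticOnNhd.exists_eq_mul_of_analyticOrderAt_le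
    (fun z _ ↦ hf.analyticAt z) (fun z _ ↦ hh.analyticAt z) hord
  exact ⟨u, fun z ↦ (hu z trivial).differentiableAt, fun z ↦ hfu z trivial⟩

/-- With `h` the locally uniformly convergent product `∏ (1 - z/α j)^2`,
any entire function `f` vanishing to order at least `2` at each `α j` is divisible by `h`:
`f = h * u` for some entire `u`. -/
theorem divisible_by_product (α : ℕ → ℂ) (hinj : Function.Injective α)
    (hne : ∀ j, α j ≠ 0) (hsum : Summable fun j => 1 / ‖α j‖)
    (h : ℂ → ℂ)
    (hprod : TendstoLocallyUniformly
      (fun N z => ∏ j ∈ Finset.range N, (1 - z / α j) ^ 2) h atTop)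
    (f : ℂ → ℂ) (hf : Differentiable ℂ f)
    (hvanish : ∀ j, f (α j) = 0 ∧ deriv f (α j) = 0) :
    ∃ u : ℂ → ℂ, Differentiable ℂ u ∧ ∀ z, f z = h z * u z :=
  divisible_by_product_general α hinj hsum h hprod f hf hvanish
end

section
/- Let (a_j) be a sequence of complex numbers converging to a_0, (ρ_j) a sequence of positive reals tending to 0, and suppose the functions ξ ↦ exp(j·a_j + j·ρ_j·ξ) converge locally uniformly on ℂ to a non-constant holomorphic function L. Then the sequence (j·ρ_j) converges to some nonzero complex number B, the sequence exp(j·a_j) converges to some nonzero complex number e^A, and L(ξ) = exp(A + B·ξ) for all ξ ∈ ℂ. -/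
open Filter Topology

/-- If `a j → a₀`, `ρ j > 0`, `ρ j → 0` and the functions
`ξ ↦ exp (j * a j + j * ρ j * ξ)` converge locally uniformly on `ℂ` to a non-constant
holomorphic `L`, then `j * ρ j → B ≠ 0`, `exp (j * a j) → exp A ≠ 0`, and
`L ξ = exp (A + B * ξ)`. -/
theorem limit_of_rescaled_exponentials (a : ℕ → ℂ) (a₀ : ℂ)
    (ha : Tendsto a atTop (𝓝 a₀)) (ρ : ℕ → ℝ) (hρpos : ∀ j, 0 < ρ j)
    (hρ : Tendsto ρ atTop (𝓝 0)) (L : ℂ → ℂ) (hL : Differentiable ℂ L)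
    (hnc : ¬∃ c : ℂ, ∀ ξ, L ξ = c)
    (hlim : TendstoLocallyUniformly
      (fun (j : ℕ) (ξ : ℂ) => Complex.exp ((j : ℂ) * a j + (j : ℂ) * (ρ j : ℂ) * ξ)) L atTop) :
    ∃ A B : ℂ, B ≠ 0 ∧
      Tendsto (fun (j : ℕ) => (j : ℂ) * (ρ j : ℂ)) atTop (𝓝 B) ∧
      Tendsto (fun (j : ℕ) => Complex.exp ((j : ℂ) * a j)) atTop (𝓝 (Complex.exp A)) ∧
      ∀ ξ, L ξ = Complex.exp (A + B * ξ) := by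
  set F : ℕ → ℂ → ℂ :=
    fun j ξ => Complex.exp ((j : ℂ) * a j + (j : ℂ) * (ρ j : ℂ) * ξ) with hF
  set b : ℕ → ℂ := fun j => (j : ℂ) * (ρ j : ℂ) with hb
  set c : ℕ → ℂ := fun j => (j : ℂ) * a j with hc
  -- derivatives of F j
  have hder : ∀ j ξ, HasDerivAt (F j) (b j * F j ξ) ξ := by
    intro j ξ
    have h1 : HasDerivAt (fun ξ : ℂ => c j + b j * ξ) (b j) ξ := by
      simpa using ((hasDerivAt_id ξ).const_mul (b j)).const_add (c j)
    simpa [hF, hb, hc, mul_comm] using h1.cexp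
  have hderiv : ∀ j ξ, deriv (F j) ξ = b j * F j ξ := fun j ξ => (hder j ξ).deriv
  -- locally uniform convergence on univ + convergence of derivatives
  have hlimOn : TendstoLocallyUniformlyOn F L atTop Set.univ := by
    rw [tendstoLocallyUniformlyOn_univ]; exact hlim
  have hdiffF : ∀ j, DifferentiableOn ℂ (F j) Set.univ := fun j x _ =>
    ((hder j x).differentiableAt).differentiableWithinAt
  have hdlim : TendstoLocallyUniformlyOn (deriv ∘ F) (deriv L) atTop Set.univ :=
    hlimOn.deriv (Eventually.of_forall hdiffF) isOpen_univ
  -- pointwise limits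
  have hpt : ∀ ξ, Tendsto (fun j => F j ξ) atTop (𝓝 (L ξ)) :=
    fun ξ => hlimOn.tendsto_at (Set.mem_univ ξ)
  have hdpt : ∀ ξ, Tendsto (fun j => deriv (F j) ξ) atTop (𝓝 (deriv L ξ)) :=
    fun ξ => hdlim.tendsto_at (Set.mem_univ ξ)
  -- pick ξ₀ with L ξ₀ ≠ 0
  have hne0 : ∃ ξ₀, L ξ₀ ≠ 0 := by
    by_contra h
    push_neg at h
    exact hnc ⟨0, h⟩
  obtain ⟨ξ₀, hξ₀⟩ := hne0
  -- b j → B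
  set B : ℂ := deriv L ξ₀ / L ξ₀ with hB
  have hbB : Tendsto b atTop (𝓝 B) := by
    have h1 : Tendsto (fun j => deriv (F j) ξ₀ / F j ξ₀) atTop (𝓝 B) :=
      (hdpt ξ₀).div (hpt ξ₀) hξ₀
    have h2 : (fun j => deriv (F j) ξ₀ / F j ξ₀) = fun j => b j := by
      funext j
      rw [hderiv j ξ₀, mul_div_assoc, div_self (Complex.exp_ne_zero _), mul_one]
    rwa [h2] at h1
  -- exp (c j) = F j 0 → L 0
  have hc0 : Tendsto (fun j => Complex.exp (c j)) atTop (𝓝 (L 0)) := by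
    have := hpt 0
    simpa [hF] using this
  -- L ξ = L 0 * exp (B ξ)
  have hform : ∀ ξ, L ξ = L 0 * Complex.exp (B * ξ) := by
    intro ξ
    have h1 : Tendsto (fun j => Complex.exp (c j) * Complex.exp (b j * ξ)) atTop
        (𝓝 (L 0 * Complex.exp (B * ξ))) :=
      hc0.mul ((Complex.continuous_exp.tendsto _).comp (hbB.mul_const ξ))
    have h2 : (fun j => Complex.exp (c j) * Complex.exp (b j * ξ)) = fun j => F j ξ := by
      funext j; rw [← Complex.exp_add]
    rw [h2] at h1
    exact tendsto_nhds_unique (hpt ξ) h1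
  have hL0 : L 0 ≠ 0 := by
    intro h
    exact hnc ⟨0, fun ξ => by rw [hform ξ, h, zero_mul]⟩
  have hBne : B ≠ 0 := by
    intro h
    exact hnc ⟨L 0, fun ξ => by rw [hform ξ, h, zero_mul, Complex.exp_zero, mul_one]⟩
  refine ⟨Complex.log (L 0), B, hBne, hbB, ?_, ?_⟩
  · rwa [Complex.exp_log hL0]
  · intro ξ
    rw [hform ξ, Complex.exp_add, Complex.exp_log hL0]
end

section
/- ℂⁿ with n ≥ 2 is not of E-limit type for any Hermitian metric E on ℂⁿ. -/
open Filter Topology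

/-- A Hermitian metric on a space with trivialized tangent bundle, recorded through its
length function on tangent vectors: a norm on the (complex) tangent space at each point. -/
structure HermMetric (P V : Type*) [NormedAddCommGroup V] [NormedSpace ℂ V] where
  len : P → V → ℝ
  len_nonneg : ∀ p v, 0 ≤ len p v
  len_pos : ∀ p v, v ≠ 0 → 0 < len p v
  len_smul : ∀ (p : P) (a : ℂ) (v : V), len p (a • v) = ‖a‖ * len p (v)
  len_add_le : ∀ p u v, len p (u + v) ≤ len p u + len p v

variable {Y : Type*} [NormedAddCommGroup Y] [NormedSpace ℂ Y]

/-- A sequence of maps on a domain `Δ` is compactly divergent if it eventually leaves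
every compact subset of the target along every compact subset of `Δ`. -/
def CompactlyDivergent (u : ℕ → ℂ → Y) (Δ : Set ℂ) : Prop :=
  ∀ K : Set ℂ, K ⊆ Δ → IsCompact K → ∀ L : Set Y, IsCompact L →
    ∃ j₀, ∀ j ≥ j₀, ∀ z ∈ K, u j z ∉ L

/-- A family of maps on `Δ` is normal if every sequence in it has a subsequence converging
uniformly on compact subsets of `Δ`. -/
def IsNormalFamily (𝓕 : Set (ℂ → Y)) (Δ : Set ℂ) : Prop :=
  ∀ u : ℕ → ℂ → Y, (∀ j, u j ∈ 𝓕) →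
    ∃ (φ : ℕ → ℕ) (g : ℂ → Y), StrictMono φ ∧
      TendstoLocallyUniformlyOn (fun j => u (φ j)) g atTop Δ

/-- `Y` is of `E`-limit type if for every non-normal family of holomorphic maps from a
domain `Δ ⊆ ℂ` into `Y` containing no compactly divergent sequence, a Brody-type
rescaling `ξ ↦ f j (p j + ρ j ξ)` converges locally uniformly on `ℂ` to a non-constant
`E`-Brody curve. -/
def IsELimitType (E : HermMetric Y Y) : Prop :=
  ∀ Δ : Set ℂ, IsOpen Δ → IsConnected Δ →
    ∀ 𝓕 : Set (ℂ → Y), (∀ f ∈ 𝓕, DifferentiableOn ℂ f Δ) →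
      ¬IsNormalFamily 𝓕 Δ →
      (∀ u : ℕ → ℂ → Y, (∀ j, u j ∈ 𝓕) → ¬CompactlyDivergent u Δ) →
      ∃ (p : ℕ → ℂ) (p₀ : ℂ) (fs : ℕ → ℂ → Y) (ρ : ℕ → ℝ) (g : ℂ → Y),
        (∀ j, p j ∈ Δ) ∧ p₀ ∈ Δ ∧ Tendsto p atTop (𝓝 p₀) ∧
        (∀ j, fs j ∈ 𝓕) ∧ (∀ j, 0 < ρ j) ∧ Tendsto ρ atTop (𝓝 0) ∧
        TendstoLocallyUniformly (fun (j : ℕ) (ξ : ℂ) => fs j (p j + (ρ j : ℂ) * ξ))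
          g atTop ∧
        Differentiable ℂ g ∧ ¬(∃ y, ∀ ξ, g ξ = y) ∧
        ∃ c : ℝ, ∀ ξ, E.len (g ξ) (deriv g ξ) ≤ c

/-! Choose a continuous functional `ℓ` and vectors `v, u` with `ℓ v = 1`, `ℓ u = 0`, `u ≠ 0`, and
an entire `h` vanishing on `ℕ` whose derivatives are so large that
`‖h' m‖ · |u|_E ≥ m + |v|_E` at the point `m • v`. For `Φ w = w • v + h w • u` the family
`z ↦ Φ (k z)` is not normal (its `ℓ`-coordinate at `z = 1` is `k`) and has no compactly divergent
sequence (all members send `0` to `Φ 0`). Since `ℓ ∘ Φ = id`, every rescaling limit is of the form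
`ξ ↦ Φ (c + b ξ)`, with `b ≠ 0` as it is non-constant; where `c + b ξ = m` its `E`-speed is at
least `‖b‖ m`, so it is not an `E`-Brody curve. -/

theorem summable_div_natCast_add_one_pow {R : ℝ} (hR : 0 ≤ R) {e : ℕ → ℕ} (he : ∀ k, k ≤ e k) :
    Summable fun k : ℕ => (R / ((k : ℝ) + 1)) ^ e k := by
  obtain ⟨N, hN⟩ := exists_nat_ge (2 * R)
  rw [← summable_nat_add_iff N]
  refine .of_nonneg_of_le (fun k => by positivity) (fun k => ?_)
    (summable_geometric_of_lt_one (by norm_num : (0 : ℝ) ≤ 1 / 2) (by norm_num))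
  have hbase : R / ((↑(k + N) : ℝ) + 1) ≤ 1 / 2 := by
    rw [div_le_div_iff₀ (by positivity) (by norm_num)]
    push_cast
    nlinarith [(k.cast_nonneg : (0 : ℝ) ≤ k)]
  calc (R / ((↑(k + N) : ℝ) + 1)) ^ e (k + N)
      ≤ (1 / 2 : ℝ) ^ e (k + N) := pow_le_pow_left₀ (by positivity) hbase _
    _ ≤ (1 / 2 : ℝ) ^ k :=
        pow_le_pow_of_le_one (by norm_num) (by norm_num) ((k.le_add_right N).trans (he _))

/-- The `k`-th term `(z / (k + 1)) ^ e k` dominates at `z = k + 2`, where its base exceeds `1`,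
while `e k ≥ k` keeps the series locally uniformly summable. -/
theorem exists_differentiable_le_norm_natCast (t : ℕ → ℝ) :
    ∃ G : ℂ → ℂ, Differentiable ℂ G ∧ ∀ m : ℕ, 2 ≤ m → t m ≤ ‖G m‖ := by
  have hexp : ∀ k : ℕ, ∃ e : ℕ, k ≤ e ∧ t (k + 2) ≤ (((k : ℝ) + 2) / ((k : ℝ) + 1)) ^ e := by
    intro k
    have hgt : (1 : ℝ) < ((k : ℝ) + 2) / ((k : ℝ) + 1) := by
      rw [lt_div_iff₀ (by positivity)]; linarith
    obtain ⟨N, hN⟩ := pow_unbounded_of_one_lt (t (k + 2)) hgt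
    exact ⟨max k N, le_max_left _ _, hN.le.trans (pow_le_pow_right₀ hgt.le (le_max_right _ _))⟩
  choose e he ht using hexp
  refine ⟨fun z => ∑' k : ℕ, (z / ((k : ℂ) + 1)) ^ e k, fun z₀ => ?_, fun m hm => ?_⟩
  · have hmem : z₀ ∈ Metric.ball (0 : ℂ) (‖z₀‖ + 1) := by simp
    refine (Complex.differentiableOn_tsum_of_summable_norm
      (summable_div_natCast_add_one_pow (by positivity : 0 ≤ ‖z₀‖ + 1) he)
      (fun k => ((differentiable_id.div_const _).pow _).differentiableOn) Metric.isOpen_ball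
      (fun k z hz => ?_)).differentiableAt (Metric.isOpen_ball.mem_nhds hmem)
    rw [norm_pow, norm_div, ← Nat.cast_add_one, Complex.norm_natCast, Nat.cast_add_one]
    gcongr
    exact (mem_ball_zero_iff.1 hz).le
  · obtain ⟨l, rfl⟩ : ∃ l, m = l + 2 := ⟨m - 2, by omega⟩
    set F : ℕ → ℝ := fun k => (((l : ℝ) + 2) / ((k : ℝ) + 1)) ^ e k
    have hF : Summable F := summable_div_natCast_add_one_pow (by positivity) he
    have hG : ∑' k : ℕ, (((l + 2 : ℕ) : ℂ) / ((k : ℂ) + 1)) ^ e k = ((∑' k, F k : ℝ) : ℂ) := by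
      rw [Complex.ofReal_tsum]
      exact tsum_congr fun k => by simp [F]
    beta_reduce
    rw [hG, Complex.norm_real, Real.norm_eq_abs]
    calc t (l + 2) ≤ F l := ht l
      _ ≤ ∑' k, F k := hF.le_tsum l fun k _ => by positivity
      _ ≤ |∑' k, F k| := le_abs_self _

theorem exists_differentiable_eq_zero_natCast_le_norm_deriv (t : ℕ → ℝ) :
    ∃ h : ℂ → ℂ, Differentiable ℂ h ∧ (∀ m : ℕ, h m = 0) ∧
      ∀ᶠ m : ℕ in atTop, t m ≤ ‖deriv h m‖ := by
  obtain ⟨G, hG, hGt⟩ := exists_differentiable_le_norm_natCast fun m => t m / Real.pi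
  have hsin : Differentiable ℂ fun z : ℂ => Complex.sin (z * Real.pi) :=
    Complex.differentiable_sin.comp (differentiable_id.mul_const _)
  refine ⟨fun z => Complex.sin (z * Real.pi) * G z, hsin.mul hG,
    fun m => by simp [Complex.sin_nat_mul_pi], eventually_atTop.2 ⟨2, fun m hm => ?_⟩⟩
  have hderiv : deriv (fun z => Complex.sin (z * Real.pi) * G z) m
      = Complex.cos (m * Real.pi) * Real.pi * G m := by
    have hsin' : HasDerivAt (fun z : ℂ => Complex.sin (z * Real.pi))
        (Complex.cos (m * Real.pi) * Real.pi) m :=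
      (Complex.hasDerivAt_sin _).comp (m : ℂ) (hasDerivAt_mul_const _)
    rw [(hsin'.fun_mul (hG m).hasDerivAt).deriv, Complex.sin_nat_mul_pi, zero_mul, add_zero]
  have hcos : ‖Complex.cos (m * Real.pi)‖ = 1 := by
    rw [← Complex.ofReal_natCast, ← Complex.ofReal_mul, ← Complex.ofReal_cos,
      Real.cos_nat_mul_pi, Complex.norm_real, norm_pow, norm_neg, norm_one, one_pow]
  rw [hderiv, norm_mul, norm_mul, hcos, one_mul, Complex.norm_real,
    Real.norm_of_nonneg Real.pi_pos.le, ← div_le_iff₀' Real.pi_pos]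
  exact hGt m hm

theorem exists_eq_affine_of_tendsto_comp_affine {X : Type*} [TopologicalSpace X] [T2Space X]
    {Φ : ℂ → X} {ℓ : X → ℂ} (hΦ : Continuous Φ) (hℓ : Continuous ℓ) (hℓΦ : ∀ w, ℓ (Φ w) = w)
    {a r : ℕ → ℂ} {g : ℂ → X}
    (hg : ∀ ξ, Tendsto (fun j => Φ (a j + r j * ξ)) atTop (𝓝 (g ξ))) :
    ∃ c b : ℂ, ∀ ξ, g ξ = Φ (c + b * ξ) := by
  have hlin : ∀ ξ, Tendsto (fun j => a j + r j * ξ) atTop (𝓝 (ℓ (g ξ))) := fun ξ =>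
    ((hℓ.tendsto _).comp (hg ξ)).congr fun j => hℓΦ _
  have ha : Tendsto a atTop (𝓝 (ℓ (g 0))) := by simpa using hlin 0
  have hr : Tendsto r atTop (𝓝 (ℓ (g 1) - ℓ (g 0))) := by simpa using (hlin 1).sub ha
  exact ⟨_, _, fun ξ => tendsto_nhds_unique (hg ξ) ((hΦ.tendsto _).comp (ha.add (hr.mul_const ξ)))⟩

theorem not_isNormalFamily_of_tendsto_cobounded {X : Type*} [NormedAddCommGroup X]
    {𝓕 : Set (ℂ → X)} {Δ : Set ℂ} {u : ℕ → ℂ → X} (hu : ∀ j, u j ∈ 𝓕) {z₀ : ℂ} (hz₀ : z₀ ∈ Δ)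
    (hdiv : Tendsto (fun j => u j z₀) atTop (Bornology.cobounded X)) : ¬IsNormalFamily 𝓕 Δ := by
  intro hN
  obtain ⟨φ, g, hφ, hlim⟩ := hN u hu
  rw [← tendsto_norm_atTop_iff_cobounded] at hdiv
  exact not_tendsto_atTop_of_tendsto_nhds (hlim.tendsto_at hz₀).norm
    (hdiv.comp hφ.tendsto_atTop)

theorem not_compactlyDivergent_of_apply_eq {X : Type*} [NormedAddCommGroup X]
    {u : ℕ → ℂ → X} {Δ : Set ℂ} {z₀ : ℂ} (hz₀ : z₀ ∈ Δ) {y : X} (hy : ∀ j, u j z₀ = y) :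
    ¬CompactlyDivergent u Δ := by
  intro hdiv
  obtain ⟨j₀, hj₀⟩ :=
    hdiv {z₀} (Set.singleton_subset_iff.2 hz₀) isCompact_singleton {y} isCompact_singleton
  exact hj₀ j₀ le_rfl z₀ rfl (hy j₀)

namespace HermMetric

variable {P V : Type*} [NormedAddCommGroup V] [NormedSpace ℂ V]

theorem len_le_len_add_add (E : HermMetric P V) (p : P) (x y : V) :
    E.len p x ≤ E.len p (x + y) + E.len p y :=
  calc E.len p x = E.len p ((x + y) + (-1 : ℂ) • y) := by rw [neg_one_smul, add_neg_cancel_right]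
    _ ≤ E.len p (x + y) + E.len p ((-1 : ℂ) • y) := E.len_add_le _ _ _
    _ = E.len p (x + y) + E.len p y := by rw [E.len_smul, norm_neg, norm_one, one_mul]

theorem norm_mul_len_sub_len_le (E : HermMetric P V) (p : P) (D : ℂ) (v u : V) :
    ‖D‖ * E.len p u - E.len p v ≤ E.len p (v + D • u) := by
  have := E.len_le_len_add_add p (D • u) v
  rw [E.len_smul, add_comm (D • u)] at this
  linarith

def IsBrodyCurve (E : HermMetric Y Y) (g : ℂ → Y) : Prop :=
  ∃ c : ℝ, ∀ ξ, E.len (g ξ) (deriv g ξ) ≤ c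

end HermMetric

def graphCurve (v u : Y) (h : ℂ → ℂ) (w : ℂ) : Y :=
  w • v + h w • u

section graphCurve

variable {v u : Y} {h : ℂ → ℂ}

theorem Differentiable.graphCurve (hh : Differentiable ℂ h) :
    Differentiable ℂ (graphCurve v u h) :=
  (differentiable_id.smul_const v).add (hh.smul_const u)

theorem apply_graphCurve {ℓ : Y →L[ℂ] ℂ} (hv : ℓ v = 1) (hu : ℓ u = 0) (w : ℂ) :
    ℓ (graphCurve v u h w) = w := by
  simp [graphCurve, hv, hu]

theorem graphCurve_natCast (hzero : ∀ m : ℕ, h m = 0) (m : ℕ) :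
    graphCurve v u h m = (m : ℂ) • v := by
  simp [graphCurve, hzero]

theorem hasDerivAt_graphCurve_comp_affine (hh : Differentiable ℂ h) (c b ξ : ℂ) :
    HasDerivAt (fun ξ => graphCurve v u h (c + b * ξ))
      (b • (v + deriv h (c + b * ξ) • u)) ξ := by
  have hlin : HasDerivAt (fun ξ : ℂ => c + b * ξ) b ξ := by
    simpa using ((hasDerivAt_id ξ).const_mul b).const_add c
  rw [smul_add, smul_smul, mul_comm b]
  exact (hlin.smul_const v).fun_add ((hh _).hasDerivAt.comp ξ hlin |>.smul_const u)

theorem HermMetric.not_isBrodyCurve_graphCurve_comp_affine (E : HermMetric Y Y)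
    (hh : Differentiable ℂ h) (hzero : ∀ m : ℕ, h m = 0)
    (hderiv : ∀ᶠ m : ℕ in atTop,
      m + E.len ((m : ℂ) • v) v ≤ ‖deriv h m‖ * E.len ((m : ℂ) • v) u)
    (c : ℂ) {b : ℂ} (hb : b ≠ 0) : ¬E.IsBrodyCurve fun ξ => graphCurve v u h (c + b * ξ) := by
  rintro ⟨C, hC⟩
  have hb' : 0 < ‖b‖ := norm_pos_iff.2 hb
  obtain ⟨m, hm, hmC⟩ :=
    (hderiv.and (tendsto_natCast_atTop_atTop.eventually_gt_atTop (C / ‖b‖))).exists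
  have harg : c + b * ((m - c) / b) = m := by field_simp; ring
  have hCm := hC ((m - c) / b)
  beta_reduce at hCm
  rw [(hasDerivAt_graphCurve_comp_affine hh c b _).deriv, harg, graphCurve_natCast hzero,
    E.len_smul] at hCm
  have hlen := E.norm_mul_len_sub_len_le ((m : ℂ) • v) (deriv h m) v u
  rw [div_lt_iff₀ hb'] at hmC
  nlinarith

end graphCurve

theorem not_isELimitType_of_apply_eq_one_of_apply_eq_zero (E : HermMetric Y Y)
    (ℓ : Y →L[ℂ] ℂ) {v u : Y} (hv : ℓ v = 1) (hu : ℓ u = 0) (hu₀ : u ≠ 0) : ¬IsELimitType E := by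
  intro hE
  obtain ⟨h, hh, hzero, hlarge⟩ := exists_differentiable_eq_zero_natCast_le_norm_deriv
    fun m : ℕ => (m + E.len ((m : ℂ) • v) v) / E.len ((m : ℂ) • v) u
  set Φ := graphCurve v u h
  have hℓΦ : ∀ w, ℓ (Φ w) = w := apply_graphCurve hv hu
  have hdiv : Tendsto (fun k : ℕ => Φ (k * 1)) atTop (Bornology.cobounded Y) := by
    refine tendsto_comap_iff.2 ?_ |>.mono_right ℓ.lipschitz.comap_cobounded_le
    simpa [Function.comp_def, hℓΦ] using tendsto_natCast_atTop_cobounded (α := ℂ)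
  obtain ⟨p, -, fs, ρ, g, -, -, -, hfs, -, -, hlim, -, hgnc, hBrody⟩ :=
    hE Set.univ isOpen_univ isConnected_univ (Set.range fun k : ℕ => fun z => Φ (k * z))
      (by
        rintro _ ⟨k, rfl⟩
        exact (hh.graphCurve.comp (differentiable_id.const_mul _)).differentiableOn)
      (not_isNormalFamily_of_tendsto_cobounded (fun k => ⟨k, rfl⟩) (Set.mem_univ 1) hdiv)
      (fun w hw => not_compactlyDivergent_of_apply_eq (Set.mem_univ 0) (y := Φ 0) fun j => by
        obtain ⟨k, hk⟩ := hw j; simp [← hk])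
  choose k hk using hfs
  obtain ⟨c, b, hg⟩ := exists_eq_affine_of_tendsto_comp_affine hh.graphCurve.continuous
    ℓ.continuous hℓΦ (a := fun j => k j * p j) (r := fun j => k j * ρ j) fun ξ =>
      ((tendstoLocallyUniformlyOn_univ.2 hlim).tendsto_at (Set.mem_univ ξ)).congr fun j => by
        simp only [← hk j]; exact congrArg Φ (by ring)
  have hb : b ≠ 0 := by
    rintro rfl
    exact hgnc ⟨Φ c, by simpa using hg⟩
  rw [funext hg] at hBrody
  exact E.not_isBrodyCurve_graphCurve_comp_affine hh hzero
    (hlarge.mono fun m hm => (div_le_iff₀ (E.len_pos _ _ hu₀)).1 hm) c hb hBrody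

/-- `ℂⁿ` with `n ≥ 2` is not of `E`-limit type for any Hermitian metric
`E` on `ℂⁿ`. -/
theorem Cn_not_E_limit_type (n : ℕ) (hn : 2 ≤ n)
    (E : HermMetric (EuclideanSpace ℂ (Fin n)) (EuclideanSpace ℂ (Fin n))) :
    ¬IsELimitType E :=
  not_isELimitType_of_apply_eq_one_of_apply_eq_zero E (EuclideanSpace.proj ⟨0, by omega⟩)
    (v := EuclideanSpace.single ⟨0, by omega⟩ 1) (u := EuclideanSpace.single ⟨1, hn⟩ 1)
    (by simp) (by simp) (by simp)
end
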